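/- arXiv:1911.03295 — 5 statements merged into one kernel-verified Lean document; each statement's English description precedes it below -/
import Mathlib

section
/- Let f : ℝ^d → ℝ be differentiable and suppose it is weakly invariant to the j-th feature with constant C > 0, i.e. |∂f/∂x_j (x)| < C for all x ∈ ℝ^d. Let x_1, …, x_n ∈ ℝ^d be data points with ∑_{i=1}^n (x_i)_j² > 0, and let λ ≥ C · (∑_{i=1}^n |(x_i)_j|) / (∑_{i=1}^n (x_i)_j²). Then every global minimizer g* ∈ [0,1]^d of the MIND objective L(g) = (1/n) ∑_{i=1}^n [ |f(x_i) − f(g ⊙ x_i)| + λ ⟨g ⊙ x_i, x_i⟩ ] satisfies (g*)_j = 0. -/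
/-!
If `g_j > 0`, closing the `j`-th gate (setting `g_j = 0`) lowers the regulariser by exactly
`λ g_j ∑ (x_i)_j²`, while by the mean value theorem along the `j`-th coordinate each fidelity
term grows by at most `C g_j |(x_i)_j|`, strictly whenever `(x_i)_j ≠ 0`. The choice of `λ`
makes the net change negative, contradicting minimality.
-/

open Finset Function

lemma abs_sub_lt_of_forall_abs_deriv_lt {φ : ℝ → ℝ} (hφ : Differentiable ℝ φ) {C : ℝ}
    (hC : ∀ s, |deriv φ s| < C) {s t : ℝ} (hst : s ≠ t) :
    |φ t - φ s| < C * |t - s| := by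
  wlog hlt : s < t generalizing s t
  · rw [abs_sub_comm, abs_sub_comm t]
    exact this hst.symm (hst.symm.lt_of_le (not_lt.mp hlt))
  have upper := image_sub_lt_mul_sub_of_deriv_lt hφ (fun s => (abs_lt.mp (hC s)).2) hlt
  have lower := mul_sub_lt_image_sub_of_lt_deriv hφ (fun s => (abs_lt.mp (hC s)).1) hlt
  rw [abs_of_pos (sub_pos.mpr hlt), abs_lt]
  constructor <;> linarith

section Coordinate

variable {ι : Type*} [DecidableEq ι]

lemma mul_update_zero_eq_update_mul (g y : ι → ℝ) (j : ι) :
    (fun k => update g j 0 k * y k) = update (fun k => g k * y k) j 0 := by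
  funext k
  rcases eq_or_ne k j with rfl | hk <;> simp [*]

variable [Fintype ι]

lemma sum_update_zero_mul_mul (g y : ι → ℝ) (j : ι) :
    ∑ k, update g j 0 k * y k * y k = ∑ k, g k * y k * y k - g j * y j ^ 2 := by
  suffices ∑ k, (g k * y k * y k - update g j 0 k * y k * y k) = g j * y j ^ 2 by
    rw [sum_sub_distrib] at this; linarith
  rw [sum_eq_single j (fun k _ hk => by simp [hk]) (by simp)]
  simp only [update_self, zero_mul, sub_zero]
  ring

lemma abs_sub_update_lt_of_forall_abs_fderiv_single_lt {f : (ι → ℝ) → ℝ}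
    (hf : Differentiable ℝ f) {j : ι} {C : ℝ}
    (hC : ∀ y, |fderiv ℝ f y (Pi.single j 1)| < C) (a : ι → ℝ) {s : ℝ} (hs : a j ≠ s) :
    |f a - f (update a j s)| < C * |a j - s| := by
  have hderiv : ∀ r, HasDerivAt (f ∘ update a j) (fderiv ℝ f (update a j r) (Pi.single j 1)) r :=
    fun r => (hf _).hasFDerivAt.comp_hasDerivAt r (hasDerivAt_update a j r)
  simpa using abs_sub_lt_of_forall_abs_deriv_lt (fun r => (hderiv r).differentiableAt)
    (fun r => (hderiv r).deriv ▸ hC _) hs.symm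

lemma abs_sub_update_zero_le_of_forall_abs_fderiv_single_lt {f : (ι → ℝ) → ℝ}
    (hf : Differentiable ℝ f) {j : ι} {C : ℝ}
    (hC : ∀ y, |fderiv ℝ f y (Pi.single j 1)| < C) (a : ι → ℝ) :
    |f a - f (update a j 0)| ≤ C * |a j| := by
  by_cases ha : a j = 0
  · rw [← ha, update_eq_self, sub_self, abs_zero, ha, abs_zero, mul_zero]
  · simpa using (abs_sub_update_lt_of_forall_abs_fderiv_single_lt hf hC a ha).le

lemma abs_sub_update_zero_mul_le {f : (ι → ℝ) → ℝ} (hf : Differentiable ℝ f) {j : ι} {C : ℝ}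
    (hC : ∀ y, |fderiv ℝ f y (Pi.single j 1)| < C) (y g : ι → ℝ) (hg : 0 ≤ g j) :
    |f y - f (fun k => update g j 0 k * y k)|
      ≤ |f y - f (fun k => g k * y k)| + C * (g j * |y j|) := by
  rw [mul_update_zero_eq_update_mul]
  have := abs_sub_update_zero_le_of_forall_abs_fderiv_single_lt hf hC (fun k => g k * y k)
  rw [abs_mul, abs_of_nonneg hg] at this
  linarith [abs_sub_le (f y) (f fun k => g k * y k) (f (update (fun k => g k * y k) j 0))]

lemma abs_sub_update_zero_mul_lt {f : (ι → ℝ) → ℝ} (hf : Differentiable ℝ f) {j : ι} {C : ℝ}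
    (hC : ∀ y, |fderiv ℝ f y (Pi.single j 1)| < C) (y g : ι → ℝ) (hg : 0 ≤ g j)
    (hgy : g j * y j ≠ 0) :
    |f y - f (fun k => update g j 0 k * y k)|
      < |f y - f (fun k => g k * y k)| + C * (g j * |y j|) := by
  rw [mul_update_zero_eq_update_mul]
  have := abs_sub_update_lt_of_forall_abs_fderiv_single_lt hf hC (fun k => g k * y k) hgy
  rw [sub_zero, abs_mul, abs_of_nonneg hg] at this
  linarith [abs_sub_le (f y) (f fun k => g k * y k) (f (update (fun k => g k * y k) j 0))]

end Coordinate

theorem mind_correctness_general {d n : ℕ} (f : (Fin d → ℝ) → ℝ) (hf : Differentiable ℝ f)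
    (j : Fin d) (C : ℝ)
    (hweak : ∀ x : Fin d → ℝ, |fderiv ℝ f x (Pi.single j 1)| < C)
    (x : Fin n → Fin d → ℝ)
    (hx : 0 < ∑ i, (x i j) ^ 2)
    (lam : ℝ) (hlam : C * (∑ i, |x i j|) / (∑ i, (x i j) ^ 2) ≤ lam)
    (L : (Fin d → ℝ) → ℝ)
    (hL : ∀ g : Fin d → ℝ,
      L g = (1 / (n : ℝ)) * ∑ i, (|f (x i) - f (fun k => g k * x i k)|
              + lam * ∑ k, (g k * x i k) * x i k))
    (g : Fin d → ℝ) (hg : ∀ k, g k ∈ Set.Icc (0 : ℝ) 1)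
    (hmin : ∀ g' : Fin d → ℝ, (∀ k, g' k ∈ Set.Icc (0 : ℝ) 1) → L g ≤ L g') :
    g j = 0 := by
  by_contra hgj
  have hgj_pos : 0 < g j := (hg j).1.lt_of_ne' hgj
  obtain ⟨i₀, hi₀⟩ : ∃ i, x i j ≠ 0 := by
    by_contra! h
    simp [h] at hx
  have hn : (0 : ℝ) < n := Nat.cast_pos.mpr i₀.pos
  have hg' : ∀ k, update g j 0 k ∈ Set.Icc (0 : ℝ) 1 := fun k => by
    rcases eq_or_ne k j with rfl | hk <;> simp [*]
  have hfid : ∑ i, |f (x i) - f (fun k => update g j 0 k * x i k)|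
      < ∑ i, (|f (x i) - f (fun k => g k * x i k)| + C * (g j * |x i j|)) :=
    sum_lt_sum (fun i _ => abs_sub_update_zero_mul_le hf hweak (x i) g hgj_pos.le)
      ⟨i₀, mem_univ _, abs_sub_update_zero_mul_lt hf hweak _ g hgj_pos.le (mul_ne_zero hgj hi₀)⟩
  have hlam' : C * ∑ i, |x i j| ≤ lam * ∑ i, x i j ^ 2 := (div_le_iff₀ hx).mp hlam
  have hdecrease : L (update g j 0) < L g := by
    rw [hL, hL]
    refine mul_lt_mul_of_pos_left ?_ (one_div_pos.mpr hn)
    simp only [sum_add_distrib, ← mul_sum, sum_update_zero_mul_mul, sum_sub_distrib] at hfid ⊢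
    nlinarith [mul_le_mul_of_nonneg_left hlam' hgj_pos.le]
  exact (hmin _ hg').not_gt hdecrease

/-- **MIND correctness theorem (Theorem 1).**
If `f : ℝ^d → ℝ` is differentiable and weakly invariant to the `j`-th feature with
constant `C > 0` (i.e. `|∂f/∂x_j (x)| < C` for all `x`), the data satisfy
`∑ i, (x i j)^2 > 0`, and `λ ≥ C ∑ i |x i j| / ∑ i (x i j)^2`, then every global
minimizer `g` over `[0,1]^d` of the MIND objective
`L(g) = (1/n) ∑ i [ |f(x_i) − f(g ⊙ x_i)| + λ ⟨g ⊙ x_i, x_i⟩ ]`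
satisfies `g j = 0`. -/
theorem mind_correctness {d n : ℕ} (f : (Fin d → ℝ) → ℝ) (hf : Differentiable ℝ f)
    (j : Fin d) (C : ℝ) (hC : 0 < C)
    (hweak : ∀ x : Fin d → ℝ, |fderiv ℝ f x (Pi.single j 1)| < C)
    (x : Fin n → Fin d → ℝ)
    (hx : 0 < ∑ i, (x i j) ^ 2)
    (lam : ℝ) (hlam : C * (∑ i, |x i j|) / (∑ i, (x i j) ^ 2) ≤ lam)
    (L : (Fin d → ℝ) → ℝ)
    (hL : ∀ g : Fin d → ℝ,
      L g = (1 / (n : ℝ)) * ∑ i, (|f (x i) - f (fun k => g k * x i k)|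
              + lam * ∑ k, (g k * x i k) * x i k))
    (g : Fin d → ℝ) (hg : ∀ k, g k ∈ Set.Icc (0 : ℝ) 1)
    (hmin : ∀ g' : Fin d → ℝ, (∀ k, g' k ∈ Set.Icc (0 : ℝ) 1) → L g ≤ L g') :
    g j = 0 :=
  mind_correctness_general f hf j C hweak x hx lam hlam L hL g hg hmin
end

section
/- Let f : ℝ^d → ℝ be differentiable with |∂f/∂x_j (x)| < C for all x ∈ ℝ^d, let x_1, …, x_n ∈ ℝ^d with (x_i)_j ≠ 0 for at least one i, and let λ > 0 satisfy λ · ∑_{i=1}^n (x_i)_j² ≥ C · ∑_{i=1}^n |(x_i)_j|. Fix all coordinates of g ∈ [0,1]^d except the j-th. Then the function t ↦ (1/n) ∑_{i=1}^n [ |f(x_i) − f(g(t) ⊙ x_i)| + λ ⟨g(t) ⊙ x_i, x_i⟩ ], where g(t) agrees with g except that its j-th coordinate equals t, is strictly increasing on [0,1]; in particular its unique minimum on [0,1] is attained at t = 0. -/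
/-!
Moving the `j`-th gate from `t` to `s > t` raises the regularizer by exactly
`λ (s - t) ∑ᵢ (xᵢ)ⱼ²`, while by the mean value theorem each fidelity term `|f(xᵢ) - f(g(t) ⊙ xᵢ)|`
can drop by at most `|f(g(s) ⊙ xᵢ) - f(g(t) ⊙ xᵢ)| ≤ C |(xᵢ)ⱼ| (s - t)`, strictly less for a point
with `(xᵢ)ⱼ ≠ 0`. The hypothesis on `λ` makes the gain outweigh the loss, so the objective
is strictly increasing in `t` on all of `ℝ`.
-/

open Finset Function

section

variable {ι : Type*} [Fintype ι] [DecidableEq ι] {f : (ι → ℝ) → ℝ} (g v : ι → ℝ) (j : ι)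

theorem hasDerivAt_comp_update_mul (hf : Differentiable ℝ f) (t : ℝ) :
    HasDerivAt (fun s => f (update g j s * v))
      (v j * fderiv ℝ f (update g j t * v) (Pi.single j 1)) t := by
  have h := (hf _).hasFDerivAt.comp_hasDerivAt t ((hasDerivAt_update g j t).mul_const v)
  have e : (Pi.single j 1 * v : ι → ℝ) = v j • Pi.single j 1 := by
    ext k; by_cases hk : k = j <;> simp [hk]
  rwa [e, map_smul, smul_eq_mul] at h

theorem exists_comp_update_mul_sub_eq (hf : Differentiable ℝ f) {s t : ℝ} (hts : t < s) :
    ∃ c, f (update g j s * v) - f (update g j t * v)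
      = (s - t) * (v j * fderiv ℝ f (update g j c * v) (Pi.single j 1)) := by
  obtain ⟨c, -, hc⟩ := exists_hasDerivAt_eq_slope _ _ hts
    (fun r _ => (hasDerivAt_comp_update_mul g v j hf r).continuousAt.continuousWithinAt)
    (fun r _ => hasDerivAt_comp_update_mul g v j hf r)
  exact ⟨c, by rw [hc, mul_div_cancel₀ _ (sub_pos.2 hts).ne']⟩

theorem abs_comp_update_mul_sub_le (hf : Differentiable ℝ f) {C : ℝ}
    (hC : ∀ y, |fderiv ℝ f y (Pi.single j 1)| ≤ C) {s t : ℝ} (hts : t < s) :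
    |f (update g j s * v) - f (update g j t * v)| ≤ C * |v j| * (s - t) := by
  obtain ⟨c, hc⟩ := exists_comp_update_mul_sub_eq g v j hf hts
  rw [hc, abs_mul, abs_mul, abs_of_pos (sub_pos.2 hts)]
  calc (s - t) * (|v j| * |fderiv ℝ f (update g j c * v) (Pi.single j 1)|)
      ≤ (s - t) * (|v j| * C) := by gcongr; exact hC _
    _ = C * |v j| * (s - t) := by ring

theorem abs_comp_update_mul_sub_lt (hf : Differentiable ℝ f) {C : ℝ}
    (hC : ∀ y, |fderiv ℝ f y (Pi.single j 1)| < C) (hv : v j ≠ 0) {s t : ℝ} (hts : t < s) :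
    |f (update g j s * v) - f (update g j t * v)| < C * |v j| * (s - t) := by
  obtain ⟨c, hc⟩ := exists_comp_update_mul_sub_eq g v j hf hts
  rw [hc, abs_mul, abs_mul, abs_of_pos (sub_pos.2 hts)]
  calc (s - t) * (|v j| * |fderiv ℝ f (update g j c * v) (Pi.single j 1)|)
      < (s - t) * (|v j| * C) := by gcongr; exact hC _
    _ = C * |v j| * (s - t) := by ring

theorem sum_update_mul_mul_sub (s t : ℝ) :
    ∑ k, (update g j s * v) k * v k - ∑ k, (update g j t * v) k * v k = (s - t) * v j ^ 2 := by
  rw [← sum_sub_distrib, Fintype.sum_eq_single j fun k hk => by simp [update_of_ne hk]]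
  simp only [Pi.mul_apply, update_self]
  ring

end

section

variable {ι : Type*} [Fintype ι] [DecidableEq ι]

/-- The summand of the MIND objective for the data point `v`; `update g j t * v` is `g(t) ⊙ v`. -/
def mindLoss (f : (ι → ℝ) → ℝ) (lam : ℝ) (g : ι → ℝ) (j : ι) (v : ι → ℝ) (t : ℝ) : ℝ :=
  |f v - f (update g j t * v)| + lam * ∑ k, (update g j t * v) k * v k

theorem mindLoss_sub_ge (f : (ι → ℝ) → ℝ) (lam : ℝ) (g : ι → ℝ) (j : ι) (v : ι → ℝ) (s t : ℝ) :
    (s - t) * (lam * v j ^ 2) - |f (update g j s * v) - f (update g j t * v)|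
      ≤ mindLoss f lam g j v s - mindLoss f lam g j v t := by
  have hquad : lam * ∑ k, (update g j s * v) k * v k - lam * ∑ k, (update g j t * v) k * v k
      = (s - t) * (lam * v j ^ 2) := by
    rw [← mul_sub, sum_update_mul_mul_sub]; ring
  have htri := abs_sub_abs_le_abs_sub (f v - f (update g j t * v)) (f v - f (update g j s * v))
  rw [sub_sub_sub_cancel_left] at htri
  unfold mindLoss
  linarith

theorem sum_mindLoss_strictMono {κ : Type*} [Fintype κ] {f : (ι → ℝ) → ℝ}
    (hf : Differentiable ℝ f) {j : ι} {C : ℝ} (hC : ∀ y, |fderiv ℝ f y (Pi.single j 1)| < C)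
    {x : κ → ι → ℝ} (hx : ∃ i, x i j ≠ 0) {lam : ℝ}
    (hlam : C * ∑ i, |x i j| ≤ lam * ∑ i, x i j ^ 2) (g : ι → ℝ) :
    StrictMono fun t => ∑ i, mindLoss f lam g j (x i) t := by
  intro t s hts
  obtain ⟨i₀, hi₀⟩ := hx
  have hfid : ∑ i, |f (update g j s * x i) - f (update g j t * x i)|
      < ∑ i, C * |x i j| * (s - t) :=
    sum_lt_sum (fun i _ => abs_comp_update_mul_sub_le g (x i) j hf (fun y => (hC y).le) hts)
      ⟨i₀, mem_univ _, abs_comp_update_mul_sub_lt g (x i₀) j hf hC hi₀ hts⟩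
  have hloss := sum_le_sum fun i (_ : i ∈ univ) => mindLoss_sub_ge f lam g j (x i) s t
  rw [sum_sub_distrib, sum_sub_distrib, ← mul_sum, ← mul_sum] at hloss
  rw [← sum_mul, ← mul_sum] at hfid
  have hgain := mul_le_mul_of_nonneg_right hlam (sub_pos.2 hts).le
  dsimp only
  linarith

end

theorem mind_section_strictMono_general {d n : ℕ} (f : (Fin d → ℝ) → ℝ)
    (hf : Differentiable ℝ f)
    (j : Fin d) (C : ℝ)
    (hweak : ∀ x : Fin d → ℝ, |fderiv ℝ f x (Pi.single j 1)| < C)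
    (x : Fin n → Fin d → ℝ)
    (hx : ∃ i, x i j ≠ 0)
    (lam : ℝ)
    (hlam2 : C * ∑ i, |x i j| ≤ lam * ∑ i, (x i j) ^ 2)
    (g : Fin d → ℝ)
    (φ : ℝ → ℝ)
    (hφ : ∀ t : ℝ,
      φ t = (1 / (n : ℝ)) * ∑ i,
        (|f (x i) - f (fun k => Function.update g j t k * x i k)|
          + lam * ∑ k, (Function.update g j t k * x i k) * x i k)) :
    StrictMonoOn φ (Set.Icc (0 : ℝ) 1) ∧
      ∀ t ∈ Set.Icc (0 : ℝ) 1, t ≠ 0 → φ 0 < φ t := by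
  have hn : (0 : ℝ) < n := by
    obtain ⟨i, -⟩ := hx
    exact_mod_cast i.pos
  have hφ' : φ = fun t => 1 / (n : ℝ) * ∑ i, mindLoss f lam g j (x i) t := funext hφ
  have hmono : StrictMono φ := by
    rw [hφ']
    exact (sum_mindLoss_strictMono hf hweak hx hlam2 g).const_mul (by positivity)
  exact ⟨hmono.strictMonoOn _, fun t ht ht0 => hmono (ht.1.lt_of_ne' ht0)⟩

/-- With `f` weakly invariant to the `j`-th feature (`|∂f/∂x_j (x)| < C` everywhere),
some data point having a nonzero `j`-th coordinate, and
`λ ∑ i (x i j)^2 ≥ C ∑ i |x i j|` with `λ > 0`, the single-coordinate section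
`t ↦ (1/n) ∑ i [ |f(x_i) − f(g(t) ⊙ x_i)| + λ ⟨g(t) ⊙ x_i, x_i⟩ ]`
of the MIND objective (where `g(t)` agrees with `g` except its `j`-th coordinate is `t`)
is strictly increasing on `[0,1]`; in particular its unique minimum on `[0,1]`
is attained at `t = 0`. -/
theorem mind_section_strictMono {d n : ℕ} (f : (Fin d → ℝ) → ℝ)
    (hf : Differentiable ℝ f)
    (j : Fin d) (C : ℝ)
    (hweak : ∀ x : Fin d → ℝ, |fderiv ℝ f x (Pi.single j 1)| < C)
    (x : Fin n → Fin d → ℝ)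
    (hx : ∃ i, x i j ≠ 0)
    (lam : ℝ) (hlam : 0 < lam)
    (hlam2 : C * ∑ i, |x i j| ≤ lam * ∑ i, (x i j) ^ 2)
    (g : Fin d → ℝ) (hg : ∀ k, g k ∈ Set.Icc (0 : ℝ) 1)
    (φ : ℝ → ℝ)
    (hφ : ∀ t : ℝ,
      φ t = (1 / (n : ℝ)) * ∑ i,
        (|f (x i) - f (fun k => Function.update g j t k * x i k)|
          + lam * ∑ k, (Function.update g j t k * x i k) * x i k)) :
    StrictMonoOn φ (Set.Icc (0 : ℝ) 1) ∧
      ∀ t ∈ Set.Icc (0 : ℝ) 1, t ≠ 0 → φ 0 < φ t :=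
  mind_section_strictMono_general f hf j C hweak x hx lam hlam2 g φ hφ
end

section
/- Let x_1, …, x_n ∈ ℝ^d, C_n = (1/n) ∑_{i=1}^n x_i x_iᵀ, β ∈ ℝ^d, B = diag(β), and λ > 0. A point g ∈ ℝ^d is a stationary point of the unconstrained objective J(g) = (1/n) ∑_{i=1}^n [ (βᵀ(x_i − g ⊙ x_i))² + λ ⟨g ⊙ x_i, x_i⟩ ] (i.e. ∇J(g) = 0) if and only if, with q = 1 − g, it satisfies the linear system B C_n B q = (λ/2) · diag(C_n). In particular, if B C_n B is invertible, the unique stationary point is g = 1 − (λ/2) (B C_n B)^{−1} diag(C_n). -/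
/-!
With `q = 1 - g` and `wᵢ = β ⊙ xᵢ`, the objective is
`J g = (1/n) ∑ᵢ (⟨wᵢ, q⟩² + λ ⟨xᵢ ⊙ xᵢ, g⟩)`, a quadratic whose gradient is
`λ (1/n) ∑ᵢ xᵢ ⊙ xᵢ - 2 (1/n) ∑ᵢ ⟨wᵢ, q⟩ wᵢ = λ diag(Cₙ) - 2 B Cₙ B q`,
because `B (xᵢ xᵢᵀ) B = wᵢ wᵢᵀ`. So `∇J(g) = 0` is exactly the linear system, which an
invertible `B Cₙ B` solves uniquely.
-/

open Finset Matrix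

section DotProduct

variable {𝕜 ι : Type*} [NontriviallyNormedField 𝕜] [CompleteSpace 𝕜] [Fintype ι] [DecidableEq ι]

noncomputable def dotProductCLM : (ι → 𝕜) ≃ₗ[𝕜] ((ι → 𝕜) →L[𝕜] 𝕜) :=
  (dotProductEquiv 𝕜 ι).trans LinearMap.toContinuousLinearMap

theorem hasFDerivAt_dotProduct (a g : ι → 𝕜) :
    HasFDerivAt (a ⬝ᵥ ·) (dotProductCLM a) g :=
  (dotProductCLM a).hasFDerivAt

theorem hasFDerivAt_dotProduct_one_sub_sq (a g : ι → 𝕜) :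
    HasFDerivAt (fun g => (a ⬝ᵥ (1 - g)) ^ 2)
      (dotProductCLM (-(2 * (a ⬝ᵥ (1 - g))) • a)) g := by
  have h : HasFDerivAt (fun g => a ⬝ᵥ (1 - g)) (dotProductCLM (-a)) g := by
    simp only [dotProduct_sub, map_neg]
    exact (hasFDerivAt_dotProduct a g).const_sub _
  refine (h.pow 2).congr_fderiv ?_
  rw [← map_smul, smul_neg, ← neg_smul]
  norm_num

theorem hasFDerivAt_sum_sq_add_dotProduct {κ : Type*} [Fintype κ] (w u : κ → ι → 𝕜)
    (c lam : 𝕜) (g : ι → 𝕜) :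
    HasFDerivAt (fun g => c * ∑ i, ((w i ⬝ᵥ (1 - g)) ^ 2 + lam * (u i ⬝ᵥ g)))
      (dotProductCLM (lam • c • ∑ i, u i - (2 : 𝕜) • c • ∑ i, (w i ⬝ᵥ (1 - g)) • w i)) g := by
  refine (HasFDerivAt.const_mul (HasFDerivAt.fun_sum fun i _ =>
    (hasFDerivAt_dotProduct_one_sub_sq (w i) g).add
      ((hasFDerivAt_dotProduct (u i) g).const_mul lam)) c).congr_fderiv ?_
  simp only [← map_smul, ← map_add, ← map_sum]
  congr 1
  simp only [sum_add_distrib, smul_add, neg_smul, sum_neg_distrib, mul_smul, ← smul_sum]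
  module

end DotProduct

theorem Matrix.mulVec_eq_iff_eq_inv_mulVec {n α : Type*} [Fintype n] [DecidableEq n] [CommRing α]
    {A : Matrix n n α} (hA : IsUnit A) {v w : n → α} :
    A *ᵥ v = w ↔ v = A⁻¹ *ᵥ w := by
  have hdet := (isUnit_iff_isUnit_det A).mp hA
  constructor
  · rintro rfl
    rw [mulVec_mulVec, nonsing_inv_mul _ hdet, one_mulVec]
  · rintro rfl
    rw [mulVec_mulVec, mul_nonsing_inv _ hdet, one_mulVec]

theorem Matrix.diagonal_mul_vecMulVec_mul_diagonal {n α : Type*} [Fintype n] [DecidableEq n]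
    [CommSemiring α] (β u v : n → α) :
    diagonal β * vecMulVec u v * diagonal β = vecMulVec (β * u) (β * v) := by
  ext i j
  simp only [mul_diagonal, diagonal_mul, vecMulVec_apply, Pi.mul_apply]
  ring

theorem Matrix.diagonal_mul_smul_sum_vecMulVec_self_mul_diagonal_mulVec
    {κ n α : Type*} [Fintype κ] [Fintype n] [DecidableEq n] [CommSemiring α]
    (x : κ → n → α) (c : α) (β q : n → α) :
    (diagonal β * (c • ∑ i, vecMulVec (x i) (x i)) * diagonal β) *ᵥ q
      = c • ∑ i, ((β * x i) ⬝ᵥ q) • (β * x i) := by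
  simp only [Matrix.mul_smul, Matrix.smul_mul, Matrix.mul_sum, Matrix.sum_mul,
    diagonal_mul_vecMulVec_mul_diagonal, smul_mulVec, sum_mulVec, vecMulVec_mulVec,
    op_smul_eq_smul]

theorem mind_stationary_iff_general {d n : ℕ}
    (x : Fin n → Fin d → ℝ)
    (Cn : Matrix (Fin d) (Fin d) ℝ)
    (hCn : Cn = (1 / (n : ℝ)) • ∑ i, Matrix.vecMulVec (x i) (x i))
    (β : Fin d → ℝ)
    (B : Matrix (Fin d) (Fin d) ℝ) (hB : B = Matrix.diagonal β)
    (lam : ℝ)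
    (J : (Fin d → ℝ) → ℝ)
    (hJ : ∀ g : Fin d → ℝ,
      J g = (1 / (n : ℝ)) * ∑ i,
        ((∑ k, β k * (x i k - g k * x i k)) ^ 2
          + lam * ∑ k, (g k * x i k) * x i k)) :
    (∀ g : Fin d → ℝ,
      fderiv ℝ J g = 0 ↔ (B * Cn * B) *ᵥ ((1 : Fin d → ℝ) - g) = (lam / 2) • Matrix.diag Cn) ∧
    (IsUnit (B * Cn * B) →
      ∀ g : Fin d → ℝ,
        fderiv ℝ J g = 0 ↔
          g = (1 : Fin d → ℝ) - (lam / 2) • ((B * Cn * B)⁻¹ *ᵥ Matrix.diag Cn)) := by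
  have hJ_dot : J = fun g => (1 / (n : ℝ)) *
      ∑ i, (((β * x i) ⬝ᵥ (1 - g)) ^ 2 + lam * ((x i * x i) ⬝ᵥ g)) := by
    funext g
    simp only [hJ, dotProduct, Pi.mul_apply, Pi.sub_apply, Pi.one_apply]
    congr 1
    refine sum_congr rfl fun i _ => ?_
    congr 2 <;> exact sum_congr rfl fun k _ => by ring
  have hdiag : diag Cn = (1 / (n : ℝ)) • ∑ i, x i * x i := by
    simp only [hCn, diag_smul, diag_sum, diag_vecMulVec]
  have stationary (g : Fin d → ℝ) :
      fderiv ℝ J g = 0 ↔ (B * Cn * B) *ᵥ (1 - g) = (lam / 2) • diag Cn := by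
    rw [hJ_dot, (hasFDerivAt_sum_sq_add_dotProduct _ _ _ _ g).fderiv,
      LinearEquiv.map_eq_zero_iff, hdiag, hB, hCn,
      diagonal_mul_smul_sum_vecMulVec_self_mul_diagonal_mulVec, sub_eq_zero,
      div_eq_inv_mul lam 2, mul_smul]
    exact (eq_comm.trans (inv_smul_eq_iff₀ two_ne_zero)).symm
  refine ⟨stationary, fun hM g => ?_⟩
  rw [stationary, mulVec_eq_iff_eq_inv_mulVec hM, mulVec_smul, eq_sub_iff_add_eq, add_comm,
    ← eq_sub_iff_add_eq, eq_comm]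

/-- A point `g ∈ ℝ^d` is a stationary point of the unconstrained simplified MIND
objective `J(g) = (1/n) ∑ i [ (βᵀ(x_i − g ⊙ x_i))² + λ ⟨g ⊙ x_i, x_i⟩ ]`
(i.e. `∇J(g) = 0`) iff, with `q = 1 − g`, it satisfies the linear system
`B C_n B q = (λ/2) diag(C_n)`, where `C_n = (1/n) ∑ i x_i x_iᵀ` and `B = diag β`.
In particular, if `B C_n B` is invertible, the unique stationary point is
`g = 1 − (λ/2) (B C_n B)⁻¹ diag(C_n)`. -/
theorem mind_stationary_iff {d n : ℕ}
    (x : Fin n → Fin d → ℝ)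
    (Cn : Matrix (Fin d) (Fin d) ℝ)
    (hCn : Cn = (1 / (n : ℝ)) • ∑ i, Matrix.vecMulVec (x i) (x i))
    (β : Fin d → ℝ)
    (B : Matrix (Fin d) (Fin d) ℝ) (hB : B = Matrix.diagonal β)
    (lam : ℝ) (hlam : 0 < lam)
    (J : (Fin d → ℝ) → ℝ)
    (hJ : ∀ g : Fin d → ℝ,
      J g = (1 / (n : ℝ)) * ∑ i,
        ((∑ k, β k * (x i k - g k * x i k)) ^ 2
          + lam * ∑ k, (g k * x i k) * x i k)) :
    (∀ g : Fin d → ℝ,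
      fderiv ℝ J g = 0 ↔ (B * Cn * B) *ᵥ ((1 : Fin d → ℝ) - g) = (lam / 2) • Matrix.diag Cn) ∧
    (IsUnit (B * Cn * B) →
      ∀ g : Fin d → ℝ,
        fderiv ℝ J g = 0 ↔
          g = (1 : Fin d → ℝ) - (lam / 2) • ((B * Cn * B)⁻¹ *ᵥ Matrix.diag Cn)) :=
  mind_stationary_iff_general x Cn hCn β B hB lam J hJ
end

section
/- Let x_1, …, x_n ∈ ℝ^d with empirical second-moment matrix C_n = (1/n) ∑_{i=1}^n x_i x_iᵀ, let β ∈ ℝ^d with all coordinates nonzero, and suppose C_n is a diagonal matrix with positive diagonal entries. Then for every λ > 0 and every j ∈ {1, …, d}, the minimizer g* ∈ [0,1]^d of J(g) = (1/n) ∑_{i=1}^n [ (βᵀ(x_i − g ⊙ x_i))² + λ ⟨g ⊙ x_i, x_i⟩ ] satisfies (g*)_j = clamp_{[0,1]}( 1 − λ β_j^{−2} / 2 ), where clamp_{[0,1]} projects a real number onto the interval [0,1]. -/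
/-!
For diagonal `C_n` the objective separates into
`J g = ∑ k, (C_n)ₖₖ (β_k² (1 - g_k)² + λ g_k)`, so a minimizer over the box minimizes every
summand over `[0,1]`. Each summand is a convex parabola in `g_k` with vertex
`1 - λ β_k⁻² / 2`, and the minimizer of a convex parabola on an interval is the projection of
its vertex onto the interval.
-/

open Finset Matrix

section QuadraticForm

variable {ι κ R : Type*} [Fintype ι] [Fintype κ] [CommRing R]

theorem dotProduct_sum_vecMulVec_mulVec (x : ι → κ → R) (v : κ → R) :
    v ⬝ᵥ (∑ i, vecMulVec (x i) (x i)) *ᵥ v = ∑ i, (v ⬝ᵥ x i) ^ 2 := by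
  simp only [sum_mulVec, vecMulVec_mulVec, op_smul_eq_smul, sum_dotProduct, smul_dotProduct,
    dotProduct_comm v, smul_eq_mul, sq]

theorem Matrix.IsDiag.dotProduct_mulVec_self {A : Matrix κ κ R} (hA : A.IsDiag) (v : κ → R) :
    v ⬝ᵥ A *ᵥ v = ∑ k, A k k * v k ^ 2 := by
  classical
  rw [← hA.diagonal_diag]
  simp only [dotProduct, mulVec_diagonal, diagonal_apply_eq, diag_apply]
  exact sum_congr rfl fun k _ => by ring

theorem mind_objective_eq_sum_diag {C : Matrix κ κ R} {c : R} {x : ι → κ → R}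
    (hC : C = c • ∑ i, vecMulVec (x i) (x i)) (hdiag : C.IsDiag) (β g : κ → R) (lam : R) :
    c * ∑ i, ((∑ k, β k * (x i k - g k * x i k)) ^ 2 + lam * ∑ k, g k * x i k * x i k)
      = ∑ k, C k k * (β k ^ 2 * (1 - g k) ^ 2 + lam * g k) := by
  set v : κ → R := fun k => β k * (1 - g k)
  have hfit : c * ∑ i, (∑ k, β k * (x i k - g k * x i k)) ^ 2 = ∑ k, C k k * v k ^ 2 := by
    rw [← hdiag.dotProduct_mulVec_self, hC, smul_mulVec, dotProduct_smul,
      dotProduct_sum_vecMulVec_mulVec, smul_eq_mul]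
    congr! 3 with i
    exact sum_congr rfl fun k _ => by ring
  have hpenalty : c * ∑ i, ∑ k, g k * x i k * x i k = ∑ k, C k k * g k := by
    simp only [hC, Matrix.smul_apply, Matrix.sum_apply, vecMulVec_apply, smul_eq_mul, mul_sum]
    rw [sum_comm]
    exact sum_congr rfl fun k _ => by rw [sum_mul]; exact sum_congr rfl fun i _ => by ring
  calc _ = c * ∑ i, (∑ k, β k * (x i k - g k * x i k)) ^ 2
        + lam * (c * ∑ i, ∑ k, g k * x i k * x i k) := by
          rw [sum_add_distrib, ← mul_sum]; ring
    _ = _ := by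
      rw [hfit, hpenalty, mul_sum, ← sum_add_distrib]
      exact sum_congr rfl fun k _ => by ring

end QuadraticForm

theorem isMinOn_apply_of_isMinOn_sum {ι α M : Type*} [Fintype ι] [DecidableEq ι]
    [AddCommMonoid M] [PartialOrder M] [IsOrderedCancelAddMonoid M] {S : Set α}
    (φ : ι → α → M) {g : ι → α} (hg : g ∈ Set.univ.pi fun _ => S)
    (hmin : IsMinOn (fun h => ∑ k, φ k (h k)) (Set.univ.pi fun _ => S) g) (j : ι) :
    IsMinOn (φ j) S (g j) := by
  intro t ht
  have hupdate : ∑ k, φ k (g k) ≤ ∑ k, φ k (Function.update g j t k) :=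
    hmin ((Set.update_mem_pi_iff_of_mem (i := j) hg).2 fun _ => ht)
  have hrest :
      ∑ k ∈ univ.erase j, φ k (Function.update g j t k) = ∑ k ∈ univ.erase j, φ k (g k) :=
    sum_congr rfl fun k hk => by rw [Function.update_of_ne (ne_of_mem_erase hk)]
  rw [← add_sum_erase _ _ (mem_univ j), ← add_sum_erase _ _ (mem_univ j), hrest,
    Function.update_self] at hupdate
  exact le_of_add_le_add_right hupdate

section Clamp

variable {R : Type*} [CommRing R] [LinearOrder R] [IsStrictOrderedRing R]

theorem mul_sub_max_min_nonneg {lo hi m s : R} (hs : s ∈ Set.Icc lo hi) :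
    0 ≤ (s - max lo (min hi m)) * (max lo (min hi m) - m) := by
  obtain ⟨hlo, hhi⟩ := hs
  rcases le_total m lo with hm | hm
  · rw [min_eq_right (hm.trans (hlo.trans hhi)), max_eq_left hm]
    exact mul_nonneg (sub_nonneg.2 hlo) (sub_nonneg.2 hm)
  rcases le_total hi m with hm' | hm'
  · rw [min_eq_left hm', max_eq_right (hlo.trans hhi)]
    exact mul_nonneg_of_nonpos_of_nonpos (sub_nonpos.2 hhi) (sub_nonpos.2 hm')
  · rw [min_eq_right hm', max_eq_right hm, sub_self, mul_zero]

theorem eq_max_min_of_isMinOn_sq {a m e lo hi s : R} (ha : 0 < a) (hs : s ∈ Set.Icc lo hi)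
    (hmin : IsMinOn (fun t => a * (t - m) ^ 2 + e) (Set.Icc lo hi) s) :
    s = max lo (min hi m) := by
  set p := max lo (min hi m)
  have hp : p ∈ Set.Icc lo hi :=
    ⟨le_max_left _ _, max_le (hs.1.trans hs.2) (min_le_left _ _)⟩
  have hle : a * (s - m) ^ 2 + e ≤ a * (p - m) ^ 2 + e := hmin hp
  have hproj := mul_sub_max_min_nonneg (m := m) hs
  have hdist : a * (s - p) ^ 2 ≤ 0 := by nlinarith
  have hsq : (s - p) ^ 2 = 0 :=
    le_antisymm (nonpos_of_mul_nonpos_right hdist ha) (sq_nonneg _)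
  exact sub_eq_zero.1 (pow_eq_zero_iff two_ne_zero |>.1 hsq)

end Clamp

/-- **Uncorrelated-features case.**
If the empirical second-moment matrix `C_n = (1/n) ∑ i x_i x_iᵀ` is diagonal with
positive diagonal entries and every coordinate of `β` is nonzero, then for every
`λ > 0` and every coordinate `j`, any minimizer `g*` over `[0,1]^d` of
`J(g) = (1/n) ∑ i [ (βᵀ(x_i − g ⊙ x_i))² + λ ⟨g ⊙ x_i, x_i⟩ ]`
satisfies `(g*)_j = clamp_{[0,1]}(1 − λ β_j⁻² / 2)`. -/
theorem mind_uncorrelated {d n : ℕ}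
    (x : Fin n → Fin d → ℝ)
    (Cn : Matrix (Fin d) (Fin d) ℝ)
    (hCn : Cn = (1 / (n : ℝ)) • ∑ i, Matrix.vecMulVec (x i) (x i))
    (β : Fin d → ℝ) (hβ : ∀ k, β k ≠ 0)
    (hdiag : ∀ k l, k ≠ l → Cn k l = 0)
    (hpos : ∀ k, 0 < Cn k k) :
    ∀ lam : ℝ, 0 < lam → ∀ j : Fin d,
      ∀ J : (Fin d → ℝ) → ℝ,
        (∀ g : Fin d → ℝ,
          J g = (1 / (n : ℝ)) * ∑ i,
            ((∑ k, β k * (x i k - g k * x i k)) ^ 2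
              + lam * ∑ k, (g k * x i k) * x i k)) →
      ∀ gstar : Fin d → ℝ, (∀ k, gstar k ∈ Set.Icc (0 : ℝ) 1) →
        (∀ g : Fin d → ℝ, (∀ k, g k ∈ Set.Icc (0 : ℝ) 1) → J gstar ≤ J g) →
        gstar j = max 0 (min 1 (1 - lam * ((β j) ^ 2)⁻¹ / 2)) := by
  intro lam _ j J hJ gstar hbox hmin
  have hsep : ∀ g, J g = ∑ k, Cn k k * (β k ^ 2 * (1 - g k) ^ 2 + lam * g k) := fun g =>
    (hJ g).trans (mind_objective_eq_sum_diag hCn hdiag β g lam)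
  have hj := isMinOn_apply_of_isMinOn_sum (fun k t => Cn k k * (β k ^ 2 * (1 - t) ^ 2 + lam * t))
    (Set.mem_univ_pi.2 hbox) (isMinOn_iff.2 fun g hg => by
      simpa only [hsep] using hmin g (Set.mem_univ_pi.1 hg)) j
  have hβj : β j ≠ 0 := hβ j
  have hsquare : (fun t => Cn j j * (β j ^ 2 * (1 - t) ^ 2 + lam * t)) = fun t =>
      Cn j j * β j ^ 2 * (t - (1 - lam * (β j ^ 2)⁻¹ / 2)) ^ 2
        + Cn j j * (lam - lam ^ 2 * (β j ^ 2)⁻¹ / 4) := by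
    funext t
    field_simp
    ring
  exact eq_max_min_of_isMinOn_sq (mul_pos (hpos j) (by positivity)) (hbox j) (hsquare ▸ hj)
end

section
/- Let x_1, …, x_n ∈ ℝ^d with empirical second-moment matrix C_n = (1/n) ∑_{i=1}^n x_i x_iᵀ, let β ∈ ℝ^d with all coordinates nonzero, and suppose C_n is diagonal with positive diagonal entries. If λ ≥ 2 β_j² for some index j, then the minimizer g* ∈ [0,1]^d of J(g) = (1/n) ∑_{i=1}^n [ (βᵀ(x_i − g ⊙ x_i))² + λ ⟨g ⊙ x_i, x_i⟩ ] satisfies (g*)_j = 0. -/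
/-!
Zeroing the `j`-th gate of any feasible `g` changes `J` by `C_jj g_j (β_j² (2 - g_j) - λ)`:
since the features are uncorrelated, the cross term between feature `j` and the residual
only sees feature `j` itself. For `λ ≥ 2 β_j²` this change is at most `-C_jj β_j² g_j²`,
which is negative unless `g_j = 0`, so a minimizer cannot have `g_j > 0`.
-/

open Finset Function

theorem secondMoment_apply {ι : Type*} {n : ℕ} (x : Fin n → ι → ℝ) (k l : ι) :
    ((1 / (n : ℝ)) • ∑ i, Matrix.vecMulVec (x i) (x i)) k l
      = 1 / (n : ℝ) * ∑ i, x i k * x i l := by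
  simp [Matrix.sum_apply, Matrix.vecMulVec_apply]

section

variable {ι : Type*} [Fintype ι] {n : ℕ}

noncomputable def mindObjective (x : Fin n → ι → ℝ) (β : ι → ℝ) (lam : ℝ) (g : ι → ℝ) : ℝ :=
  1 / (n : ℝ) * ∑ i, ((∑ k, β k * (x i k - g k * x i k)) ^ 2
    + lam * ∑ k, (g k * x i k) * x i k)

theorem mean_mul_residual_of_uncorrelated (x : Fin n → ι → ℝ) (Cn : Matrix ι ι ℝ)
    (hCn : Cn = (1 / (n : ℝ)) • ∑ i, Matrix.vecMulVec (x i) (x i)) (β g : ι → ℝ) (j : ι)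
    (hdiag : ∀ k, j ≠ k → Cn j k = 0) :
    1 / (n : ℝ) * ∑ i, x i j * ∑ k, β k * (x i k - g k * x i k)
      = β j * (1 - g j) * Cn j j := by
  calc 1 / (n : ℝ) * ∑ i, x i j * ∑ k, β k * (x i k - g k * x i k)
      = ∑ k, β k * (1 - g k) * (1 / (n : ℝ) * ∑ i, x i j * x i k) := by
        simp only [mul_sum]
        rw [sum_comm]
        exact sum_congr rfl fun k _ => sum_congr rfl fun i _ => by ring
    _ = ∑ k, β k * (1 - g k) * Cn j k := by simp only [hCn, secondMoment_apply]
    _ = β j * (1 - g j) * Cn j j :=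
        sum_eq_single j (fun k _ hk => by rw [hdiag k hk.symm, mul_zero]) (by simp)

variable [DecidableEq ι]

theorem sum_apply_update {α M : Type*} [AddCommGroup M] (F : ι → α → M) (g : ι → α) (j : ι)
    (t : α) :
    ∑ k, F k (update g j t k) = ∑ k, F k (g k) + (F j t - F j (g j)) := by
  rw [← sub_eq_iff_eq_add', ← sum_sub_distrib, sum_eq_single j]
  · simp
  · intro k _ hk
    simp [update_of_ne hk]
  · simp

theorem residual_update {R : Type*} [CommRing R] (β x g : ι → R) (j : ι) (t : R) :
    ∑ k, β k * (x k - update g j t k * x k)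
      = ∑ k, β k * (x k - g k * x k) + β j * (g j - t) * x j := by
  rw [sum_apply_update (fun k s => β k * (x k - s * x k))]
  ring

theorem gatedEnergy_update {R : Type*} [CommRing R] (x g : ι → R) (j : ι) (t : R) :
    ∑ k, update g j t k * x k * x k = ∑ k, g k * x k * x k - (g j - t) * x j * x j := by
  rw [sum_apply_update (fun k s => s * x k * x k)]
  ring

theorem mindObjective_update_of_uncorrelated (x : Fin n → ι → ℝ) (Cn : Matrix ι ι ℝ)
    (hCn : Cn = (1 / (n : ℝ)) • ∑ i, Matrix.vecMulVec (x i) (x i)) (β : ι → ℝ) (lam : ℝ)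
    (g : ι → ℝ) (j : ι) (hdiag : ∀ k, j ≠ k → Cn j k = 0) (t : ℝ) :
    mindObjective x β lam (update g j t)
      = mindObjective x β lam g + Cn j j * (g j - t) * (β j ^ 2 * (2 - g j - t) - lam) := by
  have hCjj : Cn j j = 1 / (n : ℝ) * ∑ i, x i j * x i j := by rw [hCn, secondMoment_apply]
  have hcross := mean_mul_residual_of_uncorrelated x Cn hCn β g j hdiag
  set r := fun i => ∑ k, β k * (x i k - g k * x i k)
  have hterm : ∀ i, (∑ k, β k * (x i k - update g j t k * x i k)) ^ 2
        + lam * ∑ k, update g j t k * x i k * x i k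
      = (r i ^ 2 + lam * ∑ k, g k * x i k * x i k)
        + 2 * β j * (g j - t) * (x i j * r i)
        + (β j ^ 2 * (g j - t) ^ 2 - lam * (g j - t)) * (x i j * x i j) := by
    intro i
    rw [residual_update, gatedEnergy_update]
    ring
  simp only [mindObjective, hterm, sum_add_distrib, ← mul_sum]
  rw [hCjj] at hcross ⊢
  linear_combination 2 * β j * (g j - t) * hcross

end

theorem mind_uncorrelated_sparsity_general {d n : ℕ}
    (x : Fin n → Fin d → ℝ)
    (Cn : Matrix (Fin d) (Fin d) ℝ)
    (hCn : Cn = (1 / (n : ℝ)) • ∑ i, Matrix.vecMulVec (x i) (x i))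
    (β : Fin d → ℝ) (hβ : ∀ k, β k ≠ 0)
    (hdiag : ∀ k l, k ≠ l → Cn k l = 0)
    (hpos : ∀ k, 0 < Cn k k)
    (lam : ℝ)
    (j : Fin d) (hlamj : 2 * (β j) ^ 2 ≤ lam)
    (J : (Fin d → ℝ) → ℝ)
    (hJ : ∀ g : Fin d → ℝ,
      J g = (1 / (n : ℝ)) * ∑ i,
        ((∑ k, β k * (x i k - g k * x i k)) ^ 2
          + lam * ∑ k, (g k * x i k) * x i k))
    (gstar : Fin d → ℝ) (hg : ∀ k, gstar k ∈ Set.Icc (0 : ℝ) 1)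
    (hmin : ∀ g : Fin d → ℝ, (∀ k, g k ∈ Set.Icc (0 : ℝ) 1) → J gstar ≤ J g) :
    gstar j = 0 := by
  have hJ' : J = mindObjective x β lam := funext hJ
  have hfeasible : ∀ k, update gstar j 0 k ∈ Set.Icc (0 : ℝ) 1 :=
    (forall_update_iff gstar fun _ v => v ∈ Set.Icc (0 : ℝ) 1).2 ⟨by simp, fun k _ => hg k⟩
  have hgain := hmin _ hfeasible
  rw [hJ', mindObjective_update_of_uncorrelated x Cn hCn β lam gstar j (hdiag j)] at hgain
  by_contra hne
  have ha : 0 < gstar j := lt_of_le_of_ne (hg j).1 (Ne.symm hne)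
  have hβj : 0 < β j ^ 2 := by have := hβ j; positivity
  have hslope : β j ^ 2 * (2 - gstar j - 0) - lam < 0 := by nlinarith
  have hdrop : Cn j j * (gstar j - 0) * (β j ^ 2 * (2 - gstar j - 0) - lam) < 0 :=
    mul_neg_of_pos_of_neg (mul_pos (hpos j) (by simpa using ha)) hslope
  linarith

/-- **Sparsity in the uncorrelated-features case.**
If the empirical second-moment matrix `C_n = (1/n) ∑ i x_i x_iᵀ` is diagonal with
positive diagonal entries, every coordinate of `β` is nonzero, and
`λ ≥ 2 β_j²` for some index `j`, then any minimizer `g*` over `[0,1]^d` of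
`J(g) = (1/n) ∑ i [ (βᵀ(x_i − g ⊙ x_i))² + λ ⟨g ⊙ x_i, x_i⟩ ]`
satisfies `(g*)_j = 0`. -/
theorem mind_uncorrelated_sparsity {d n : ℕ}
    (x : Fin n → Fin d → ℝ)
    (Cn : Matrix (Fin d) (Fin d) ℝ)
    (hCn : Cn = (1 / (n : ℝ)) • ∑ i, Matrix.vecMulVec (x i) (x i))
    (β : Fin d → ℝ) (hβ : ∀ k, β k ≠ 0)
    (hdiag : ∀ k l, k ≠ l → Cn k l = 0)
    (hpos : ∀ k, 0 < Cn k k)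
    (lam : ℝ) (hlam : 0 < lam)
    (j : Fin d) (hlamj : 2 * (β j) ^ 2 ≤ lam)
    (J : (Fin d → ℝ) → ℝ)
    (hJ : ∀ g : Fin d → ℝ,
      J g = (1 / (n : ℝ)) * ∑ i,
        ((∑ k, β k * (x i k - g k * x i k)) ^ 2
          + lam * ∑ k, (g k * x i k) * x i k))
    (gstar : Fin d → ℝ) (hg : ∀ k, gstar k ∈ Set.Icc (0 : ℝ) 1)
    (hmin : ∀ g : Fin d → ℝ, (∀ k, g k ∈ Set.Icc (0 : ℝ) 1) → J gstar ≤ J g) :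
    gstar j = 0 :=
  mind_uncorrelated_sparsity_general x Cn hCn β hβ hdiag hpos lam j hlamj J hJ gstar hg hmin
end
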